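/- Let a, b ∈ ℝ and define γ : ℤ → ℝ by γ(0) = 1, γ(k) = a for |k| = 1, γ(k) = b for |k| = 2, and γ(k) = 0 for |k| ≥ 3. Then γ is positive definite (i.e., for every m ∈ ℕ and all c₀, …, c_m ∈ ℂ one has Σ_{k,l=0}^{m} c_k · conj(c_l) · γ(k − l) ≥ 0) if and only if (a, b) ∈ 𝒫 = 𝒫₁ ∪ 𝒫₂, where 𝒫₁ = {(a,b) ∈ ℝ² : a²/8 + (b − 1/4)² ≤ 1/16} and 𝒫₂ = {(a,b) ∈ ℝ² : a²/8 + (b − 1/4)² ≥ 1/16 and |a| − 1/2 ≤ b ≤ 1/6}. -/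

import Mathlib

/-!
Sufficiency is a Fejér–Riesz factorisation: on `𝒫` there are real `q₀, q₁, q₂` with
`γ n = ∑ⱼ qⱼ qⱼ₊ₙ`, so `γ` is the covariance of the moving average `q₀ εₜ + q₁ εₜ₋₁ + q₂ εₜ₋₂`
and the quadratic form equals `∑ₜ |∑ₖ qₜ₋ₖ cₖ|²`.

Necessity: for `cₖ = e^{ikθ}` the quadratic form on `N + 1` indices exceeds the one on `N`
indices by the spectral density `f θ = 1 + 2a cos θ + 2b cos 2θ` as soon as `N ≥ 2`, so `f ≥ 0`.
Evaluating `f` at `θ = 0`, at `θ = π` and, when `b > 1/6`, at its minimiser `cos θ = -a / (4b)`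
carves out `𝒫`.
-/

open Complex Finset
open scoped ComplexOrder ComplexConjugate Pointwise

def IsPositiveDefinite (γ : ℤ → ℝ) : Prop :=
  ∀ (m : ℕ) (c : Fin (m + 1) → ℂ),
    0 ≤ ∑ k : Fin (m + 1), ∑ l : Fin (m + 1),
      c k * (starRingEnd ℂ) (c l) * (γ (((k : ℕ) : ℤ) - ((l : ℕ) : ℤ)) : ℂ)

section Autocovariance

lemma sum_sub_eq_sum_of_support_subset {M : Type*} [AddCommMonoid M] {f : ℤ → M}
    {s T : Finset ℤ} (hf : ∀ j ∉ s, f j = 0) (k : ℤ) (hT : ∀ j ∈ s, j + k ∈ T) :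
    ∑ t ∈ T, f (t - k) = ∑ j ∈ s, f j := by
  have hsub : s.map (addRightEmbedding k) ⊆ T := by
    intro t ht
    obtain ⟨j, hj, rfl⟩ := mem_map.1 ht
    exact hT j hj
  rw [← sum_subset hsub, sum_map]
  · simp
  · intro t _ ht
    exact hf _ fun hs => ht (mem_map.2 ⟨t - k, hs, by simp⟩)

theorem quadForm_autocov_nonneg {ι : Type*} [Fintype ι] {q : ℤ → ℝ} {s : Finset ℤ}
    (hq : ∀ j ∉ s, q j = 0) (x : ι → ℤ) (c : ι → ℂ) :
    0 ≤ ∑ k, ∑ l, c k * conj (c l) * ((∑ j ∈ s, q j * q (j + (x k - x l)) : ℝ) : ℂ) := by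
  set T := s + univ.image x
  set d : ℤ → ℂ := fun t => ∑ k, (q (t - x k) : ℂ) * c k
  have hwindow (k l : ι) : ∑ j ∈ s, q j * q (j + (x k - x l)) =
      ∑ t ∈ T, q (t - x k) * q (t - x l) := by
    rw [← sum_sub_eq_sum_of_support_subset (fun j hj => by rw [hq j hj, zero_mul]) (x k)
      fun j hj => add_mem_add hj (mem_image_of_mem x (mem_univ k))]
    refine sum_congr rfl fun t _ => ?_
    ring_nf
  have hexpand : ∑ t ∈ T, d t * conj (d t) =
      ∑ k, ∑ l, c k * conj (c l) * ((∑ j ∈ s, q j * q (j + (x k - x l)) : ℝ) : ℂ) :=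
    calc ∑ t ∈ T, d t * conj (d t)
        = ∑ t ∈ T, ∑ k, ∑ l, c k * conj (c l) * ((q (t - x k) * q (t - x l) : ℝ) : ℂ) := by
          refine sum_congr rfl fun t _ => ?_
          simp only [d, map_sum, map_mul, conj_ofReal, sum_mul_sum]
          refine sum_congr rfl fun k _ => sum_congr rfl fun l _ => ?_
          push_cast
          ring
      _ = ∑ k, ∑ l, ∑ t ∈ T, c k * conj (c l) * ((q (t - x k) * q (t - x l) : ℝ) : ℂ) := by
          rw [sum_comm]
          exact sum_congr rfl fun k _ => sum_comm
      _ = _ := by simp only [hwindow, ofReal_sum, mul_sum]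
  rw [← hexpand]
  refine sum_nonneg fun t _ => ?_
  rw [mul_conj]
  exact_mod_cast normSq_nonneg (d t)

theorem isPositiveDefinite_of_eq_autocov {γ q : ℤ → ℝ} {s : Finset ℤ}
    (hq : ∀ j ∉ s, q j = 0) (hγ : ∀ n, γ n = ∑ j ∈ s, q j * q (j + n)) :
    IsPositiveDefinite γ := by
  intro m c
  simpa only [← hγ] using quadForm_autocov_nonneg hq (fun k : Fin (m + 1) => ((k : ℕ) : ℤ)) c

end Autocovariance

section Spectral

def toeplitzSum {M : Type*} [AddCommMonoid M] (F : ℤ → M) (N : ℕ) : M :=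
  ∑ k ∈ range N, ∑ l ∈ range N, F (k - l)

lemma sum_Icc_neg_eq_sum_range {M : Type*} [AddCommMonoid M] (F : ℤ → M) (N : ℕ) :
    ∑ n ∈ Icc (-N : ℤ) N, F n = ∑ k ∈ range (2 * N + 1), F (k - N) := by
  rw [Int.Icc_eq_finset_map, sum_map, show ((N : ℤ) + 1 - -N).toNat = 2 * N + 1 by omega]
  refine sum_congr rfl fun k _ => ?_
  simp [neg_add_eq_sub]

lemma toeplitzSum_succ {M : Type*} [AddCommMonoid M] (F : ℤ → M) (N : ℕ) :
    toeplitzSum F (N + 1) = toeplitzSum F N + ∑ n ∈ Icc (-N : ℤ) N, F n := by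
  have hrow : ∑ l ∈ range N, F (N - l) = ∑ j ∈ range N, F (j + 1) := by
    rw [← sum_range_reflect]
    refine sum_congr rfl fun j hj => ?_
    rw [mem_range] at hj
    congr 1
    omega
  have hinner (k : ℕ) :
      ∑ l ∈ range (N + 1), F (k - l) = ∑ l ∈ range N, F (k - l) + F (k - N) :=
    sum_range_succ _ _
  have hIcc : ∑ n ∈ Icc (-N : ℤ) N, F n =
      ∑ k ∈ range N, F (k - N) + (∑ j ∈ range N, F (j + 1) + F 0) := by
    rw [sum_Icc_neg_eq_sum_range, show 2 * N + 1 = N + (N + 1) by ring, sum_range_add,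
      sum_range_succ']
    push_cast
    simp only [add_sub_cancel_left, add_zero, sub_self]
  rw [toeplitzSum, toeplitzSum, sum_range_succ, sum_congr rfl fun k _ => hinner k, hinner N,
    sum_add_distrib, sub_self, hrow, hIcc, add_assoc]

lemma toeplitzSum_add_of_support {M : Type*} [AddCommMonoid M] {F : ℤ → M} {p : ℕ}
    (hF : ∀ n : ℤ, p < |n| → F n = 0) (m : ℕ) :
    toeplitzSum F (p + m) = toeplitzSum F p + m • ∑ n ∈ Icc (-p : ℤ) p, F n := by
  induction m with
  | zero => simp
  | succ m ih =>
    have hwide : ∑ n ∈ Icc (-(p + m : ℕ) : ℤ) (p + m : ℕ), F n = ∑ n ∈ Icc (-p : ℤ) p, F n := by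
      refine (sum_subset (Icc_subset_Icc (by omega) (by omega)) fun n _ hn => hF n ?_).symm
      rw [mem_Icc] at hn
      rw [lt_abs]
      omega
    rw [← add_assoc, toeplitzSum_succ, ih, hwide, succ_nsmul, add_assoc]

lemma IsPositiveDefinite.toeplitzSum_nonneg {γ : ℤ → ℝ} (hγ : IsPositiveDefinite γ) (θ : ℝ)
    (N : ℕ) : 0 ≤ toeplitzSum (fun n => (γ n : ℂ) * exp (n * θ * I)) N := by
  cases N with
  | zero => simp [toeplitzSum]
  | succ m =>
    have hterm (k l : ℕ) : exp (k * θ * I) * conj (exp (l * θ * I)) * (γ (k - l) : ℂ) =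
        (γ (k - l) : ℂ) * exp (((k - l : ℤ) : ℂ) * θ * I) := by
      rw [← exp_conj, map_mul, map_mul, conj_I, conj_ofReal, map_natCast, mul_comm, ← exp_add]
      push_cast
      ring_nf
    simpa only [hterm, toeplitzSum, ← Fin.sum_univ_eq_sum_range] using
      hγ m fun k => exp ((k : ℕ) * θ * I)

lemma Complex.nonneg_of_forall_add_nsmul_nonneg {z w : ℂ} (h : ∀ m : ℕ, 0 ≤ z + m • w) :
    0 ≤ w := by
  have h0 := Complex.nonneg_iff.1 (h 0)
  have h1 := Complex.nonneg_iff.1 (h 1)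
  simp only [zero_smul, add_zero, one_smul, add_re, add_im] at h0 h1
  refine Complex.nonneg_iff.2 ⟨?_, by linarith⟩
  by_contra! hw
  obtain ⟨m, hm⟩ := exists_nat_gt (z.re / -w.re)
  have hm' := (Complex.nonneg_iff.1 (h m)).1
  rw [div_lt_iff₀ (by linarith)] at hm
  simp only [nsmul_eq_mul, add_re, mul_re, natCast_re, natCast_im, zero_mul, sub_zero] at hm'
  nlinarith

theorem IsPositiveDefinite.spectral_nonneg {γ : ℤ → ℝ} (hγ : IsPositiveDefinite γ) {p : ℕ}
    (hp : ∀ n : ℤ, p < |n| → γ n = 0) (θ : ℝ) :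
    0 ≤ ∑ n ∈ Icc (-p : ℤ) p, (γ n : ℂ) * exp (n * θ * I) := by
  set F : ℤ → ℂ := fun n => (γ n : ℂ) * exp (n * θ * I)
  have hF (n : ℤ) (hn : p < |n|) : F n = 0 := by
    simp only [F, hp n hn, ofReal_zero, zero_mul]
  refine Complex.nonneg_of_forall_add_nsmul_nonneg (z := toeplitzSum F p) fun m => ?_
  rw [← toeplitzSum_add_of_support hF]
  exact hγ.toeplitzSum_nonneg θ (p + m)

end Spectral

section Region

lemma abs_le_and_of_forall_cos_nonneg {a b : ℝ}
    (h : ∀ θ : ℝ, 0 ≤ 1 + 2 * a * Real.cos θ + 2 * b * Real.cos (2 * θ)) :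
    2 * |a| ≤ 1 + 2 * b ∧ (b ≤ 1 / 6 ∨ a ^ 2 ≤ 4 * b - 8 * b ^ 2) := by
  have h0 := h 0
  have hπ := h Real.pi
  rw [Real.cos_zero, mul_zero, Real.cos_zero] at h0
  rw [Real.cos_pi, Real.cos_two_pi] at hπ
  have habs : 2 * |a| ≤ 1 + 2 * b := by
    rw [← le_div_iff₀' two_pos, abs_le]
    constructor <;> linarith
  refine ⟨habs, or_iff_not_imp_left.2 fun hb => ?_⟩
  rw [not_le] at hb
  set x := -a / (4 * b) with hx_def
  have hx : 4 * b * x = -a := by rw [hx_def]; field_simp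
  have hx1 : |x| ≤ 1 := by
    rw [hx_def, abs_div, abs_neg, abs_of_pos (by linarith : 0 < 4 * b), div_le_one₀ (by linarith)]
    linarith
  have hmin := h (Real.arccos x)
  rw [Real.cos_two_mul, Real.cos_arccos (abs_le.1 hx1).1 (abs_le.1 hx1).2] at hmin
  have hval : 4 * b * (1 + 2 * a * x + 2 * b * (2 * x ^ 2 - 1)) = 4 * b - 8 * b ^ 2 - a ^ 2 := by
    linear_combination (4 * b * x + a) * hx
  nlinarith [mul_nonneg (by linarith : (0 : ℝ) ≤ 4 * b) hmin]

lemma mem_region_iff {a b : ℝ} :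
    (a ^ 2 / 8 + (b - 1 / 4) ^ 2 ≤ 1 / 16 ∨
        (1 / 16 ≤ a ^ 2 / 8 + (b - 1 / 4) ^ 2 ∧ |a| - 1 / 2 ≤ b ∧ b ≤ 1 / 6)) ↔
      2 * |a| ≤ 1 + 2 * b ∧ (b ≤ 1 / 6 ∨ a ^ 2 ≤ 4 * b - 8 * b ^ 2) := by
  have hsq : a ^ 2 = |a| ^ 2 := (sq_abs a).symm
  constructor
  · rintro (h | ⟨-, h, hb⟩)
    · refine ⟨?_, Or.inr (by linarith)⟩
      nlinarith [abs_nonneg a, sq_nonneg (6 * b - 1)]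
    · exact ⟨by linarith, Or.inl hb⟩
  · rintro ⟨h, hb | h'⟩
    · by_cases hell : a ^ 2 / 8 + (b - 1 / 4) ^ 2 ≤ 1 / 16
      · exact Or.inl hell
      · exact Or.inr ⟨(not_le.1 hell).le, by linarith, hb⟩
    · exact Or.inl (by linarith)

lemma exists_root_of_abs_le {a b : ℝ} (h : 2 * |a| ≤ 1 + 2 * b)
    (hb : b ≤ 1 / 6 ∨ a ^ 2 ≤ 4 * b - 8 * b ^ 2) :
    ∃ S : ℝ, 0 ≤ S ∧ 4 * b ≤ S ∧ S ≤ 1 + 2 * b ∧ a ^ 2 = S * (1 + 2 * b - S) := by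
  set r := √((1 + 2 * b) ^ 2 - 4 * a ^ 2)
  have hD : 4 * a ^ 2 ≤ (1 + 2 * b) ^ 2 := by
    nlinarith [sq_abs a, abs_nonneg a]
  have hr : r ^ 2 = (1 + 2 * b) ^ 2 - 4 * a ^ 2 := Real.sq_sqrt (by linarith)
  have hr0 : 0 ≤ r := Real.sqrt_nonneg _
  have hr1 : r ≤ 1 + 2 * b :=
    (Real.sqrt_le_left (by linarith [abs_nonneg a])).2 (by linarith [sq_nonneg a])
  refine ⟨(1 + 2 * b + r) / 2, by linarith, ?_, by linarith, by linear_combination hr / 4⟩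
  rcases hb with hb | hb
  · linarith
  · have : 6 * b - 1 ≤ r := (le_abs_self _).trans (Real.abs_le_sqrt (by nlinarith))
    linarith

-- `S` is `(q₀ + q₂) ^ 2`, `S - 4b` is `(q₀ - q₂) ^ 2` and `1 + 2b - S` is `q₁ ^ 2`.
lemma exists_ma2_coeffs_of_root {a b S : ℝ} (hS0 : 0 ≤ S) (hS : 4 * b ≤ S)
    (hS1 : S ≤ 1 + 2 * b) (ha : a ^ 2 = S * (1 + 2 * b - S)) :
    ∃ q₀ q₁ q₂ : ℝ, q₀ ^ 2 + q₁ ^ 2 + q₂ ^ 2 = 1 ∧ q₀ * q₁ + q₁ * q₂ = a ∧ q₀ * q₂ = b := by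
  set s := √S
  set e := √(S - 4 * b)
  set t := √(1 + 2 * b - S)
  have hs : s ^ 2 = S := Real.sq_sqrt hS0
  have he : e ^ 2 = S - 4 * b := Real.sq_sqrt (by linarith)
  have ht : t ^ 2 = 1 + 2 * b - S := Real.sq_sqrt (by linarith)
  have hst : t * s = |a| := by
    rw [← Real.sqrt_mul (by linarith), mul_comm, ← ha, Real.sqrt_sq_eq_abs]
  obtain ⟨q₁, hq₁, hq₁s⟩ : ∃ q₁ : ℝ, q₁ ^ 2 = t ^ 2 ∧ q₁ * s = a := by
    rcases le_or_gt 0 a with ha0 | ha0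
    · exact ⟨t, rfl, by rw [hst, abs_of_nonneg ha0]⟩
    · exact ⟨-t, by ring, by rw [neg_mul, hst, abs_of_neg ha0, neg_neg]⟩
  refine ⟨(s + e) / 2, q₁, (s - e) / 2, ?_, ?_, ?_⟩
  · linear_combination hs / 2 + he / 2 + hq₁ + ht
  · linear_combination hq₁s
  · linear_combination hs / 4 - he / 4

end Region

section MovingAverage

def ma2Weights (q₀ q₁ q₂ : ℝ) (j : ℤ) : ℝ :=
  if j = 0 then q₀ else if j = 1 then q₁ else if j = 2 then q₂ else 0

lemma ma2Weights_eq_zero {q₀ q₁ q₂ : ℝ} {j : ℤ} (hj : j ∉ ({0, 1, 2} : Finset ℤ)) :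
    ma2Weights q₀ q₁ q₂ j = 0 := by
  simp only [mem_insert, mem_singleton, not_or] at hj
  simp [ma2Weights, hj.1, hj.2.1, hj.2.2]

lemma eq_autocov_ma2Weights {a b q₀ q₁ q₂ : ℝ} {γ : ℤ → ℝ} (h0 : γ 0 = 1)
    (h1 : ∀ k : ℤ, |k| = 1 → γ k = a) (h2 : ∀ k : ℤ, |k| = 2 → γ k = b)
    (h3 : ∀ k : ℤ, 3 ≤ |k| → γ k = 0)
    (hq : q₀ ^ 2 + q₁ ^ 2 + q₂ ^ 2 = 1) (ha : q₀ * q₁ + q₁ * q₂ = a) (hb : q₀ * q₂ = b)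
    (n : ℤ) :
    γ n = ∑ j ∈ ({0, 1, 2} : Finset ℤ),
      ma2Weights q₀ q₁ q₂ j * ma2Weights q₀ q₁ q₂ (j + n) := by
  rw [sum_insert (by decide), sum_insert (by decide), sum_singleton]
  rcases le_or_gt 3 |n| with hn | hn
  · rw [h3 n hn, ma2Weights_eq_zero (j := 0 + n), ma2Weights_eq_zero (j := 1 + n),
      ma2Weights_eq_zero (j := 2 + n)]
    · ring
    all_goals rw [le_abs] at hn; simp only [mem_insert, mem_singleton]; omega
  · obtain ⟨hn1, hn2⟩ := abs_lt.1 hn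
    interval_cases n <;> norm_num [ma2Weights, h0, h1, h2] <;> linarith

end MovingAverage

lemma sum_Icc_two_eq_cos {a b : ℝ} {γ : ℤ → ℝ} (h0 : γ 0 = 1)
    (h1 : ∀ k : ℤ, |k| = 1 → γ k = a) (h2 : ∀ k : ℤ, |k| = 2 → γ k = b) (θ : ℝ) :
    ∑ n ∈ Icc (-2 : ℤ) 2, (γ n : ℂ) * exp (n * θ * I) =
      ((1 + 2 * a * Real.cos θ + 2 * b * Real.cos (2 * θ) : ℝ) : ℂ) := by
  have hIcc : Icc (-2 : ℤ) 2 = {-2, -1, 0, 1, 2} := by decide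
  rw [hIcc, sum_insert (by decide), sum_insert (by decide), sum_insert (by decide),
    sum_insert (by decide), sum_singleton, h0, h1 1 (by decide), h1 (-1) (by decide),
    h2 2 (by decide), h2 (-2) (by decide)]
  push_cast
  have hθ := two_cos θ
  have h2θ := two_cos (2 * θ)
  ring_nf at hθ h2θ ⊢
  linear_combination exp_zero - (a : ℂ) * hθ - (b : ℂ) * h2θ

theorem stmt_0 (a b : ℝ) (γ : ℤ → ℝ)
    (h0 : γ 0 = 1)
    (h1 : ∀ k : ℤ, |k| = 1 → γ k = a)
    (h2 : ∀ k : ℤ, |k| = 2 → γ k = b)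
    (h3 : ∀ k : ℤ, 3 ≤ |k| → γ k = 0) :
    (∀ (m : ℕ) (c : Fin (m + 1) → ℂ),
        0 ≤ ∑ k : Fin (m + 1), ∑ l : Fin (m + 1),
          c k * (starRingEnd ℂ) (c l) * (γ (((k : ℕ) : ℤ) - ((l : ℕ) : ℤ)) : ℂ))
    ↔ (a ^ 2 / 8 + (b - 1 / 4) ^ 2 ≤ 1 / 16 ∨
        (1 / 16 ≤ a ^ 2 / 8 + (b - 1 / 4) ^ 2 ∧ |a| - 1 / 2 ≤ b ∧ b ≤ 1 / 6)) := by
  change IsPositiveDefinite γ ↔ _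
  rw [mem_region_iff]
  constructor
  · intro hγ
    refine abs_le_and_of_forall_cos_nonneg fun θ => ?_
    have hf := hγ.spectral_nonneg (p := 2) (fun n hn => h3 n (by omega)) θ
    rwa [Nat.cast_ofNat, sum_Icc_two_eq_cos h0 h1 h2, zero_le_real] at hf
  · rintro ⟨habs, hb⟩
    obtain ⟨S, hS0, hS, hS1, hS_root⟩ := exists_root_of_abs_le habs hb
    obtain ⟨q₀, q₁, q₂, hq, ha, hb⟩ := exists_ma2_coeffs_of_root hS0 hS hS1 hS_root
    exact isPositiveDefinite_of_eq_autocov (fun j hj => ma2Weights_eq_zero hj)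
      (eq_autocov_ma2Weights h0 h1 h2 h3 hq ha hb)
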